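/- For a > 0 (or more generally when the integral converges, requiring b, c > 0), ∫₀^∞ u^{a−1} exp(−b/u − c·u) du = 2(b/c)^{a/2} · K_a(2√(bc)), where K_a is the modified Bessel function of the second kind of order a. -/

import Mathlib

open Real MeasureTheory

/-- The modified Bessel function of the second kind `K_a(x)` (for `x > 0`),
given by its standard integral representation
`K_a(x) = ∫₀^∞ exp(−x cosh t) cosh(a t) dt`. -/
noncomputable def besselK (a x : ℝ) : ℝ :=
  ∫ t in Set.Ioi (0 : ℝ), Real.exp (-x * Real.cosh t) * Real.cosh (a * t)

/-! With `m = √(b/c)`, the substitution `u = m eᵗ` turns `u^{a-1} e^{-b/u - cu} du` into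
`(b/c)^{a/2} e^{-2√(bc) cosh t} e^{at} dt` on the whole line, since `b/m = cm = √(bc)`.
Folding the line integral at `0` replaces `e^{at}` by `eᵃᵗ + e⁻ᵃᵗ = 2 cosh(at)`, which gives
`2 K_a(2√(bc))`. Convergence comes from `cosh t ≥ t²/4`, a Gaussian bound. -/

open Set

theorem integral_comp_exp {E : Type*} [NormedAddCommGroup E] [NormedSpace ℝ E] (g : ℝ → E) :
    ∫ t, exp t • g (exp t) = ∫ y in Ioi 0, g y := by
  rw [← range_exp, ← image_univ, integral_image_eq_integral_abs_deriv_smul MeasurableSet.univ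
    (fun t _ ↦ (hasDerivAt_exp t).hasDerivWithinAt) exp_injective.injOn, Measure.restrict_univ]
  simp only [abs_of_pos (exp_pos _)]

theorem integral_Ioi_eq_integral_mul_exp {E : Type*} [NormedAddCommGroup E] [NormedSpace ℝ E]
    (g : ℝ → E) {m : ℝ} (hm : 0 < m) :
    ∫ u in Ioi 0, g u = ∫ t, (m * exp t) • g (m * exp t) := by
  simp_rw [mul_smul, integral_smul, integral_comp_exp (fun y ↦ g (m * y)),
    integral_comp_mul_left_Ioi' g 0 hm, mul_zero]

theorem integral_eq_integral_Ioi_add_comp_neg {E : Type*} [NormedAddCommGroup E]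
    [NormedSpace ℝ E] {f : ℝ → E} (hf : Integrable f) :
    ∫ t, f t = ∫ t in Ioi 0, (f t + f (-t)) := by
  rw [← intervalIntegral.integral_Iic_add_Ioi hf.integrableOn hf.integrableOn,
    integral_add hf.integrableOn hf.comp_neg.integrableOn, integral_comp_neg_Ioi, neg_zero,
    add_comm]

theorem sq_div_four_le_cosh (t : ℝ) : t ^ 2 / 4 ≤ cosh t := by
  have hexp : |t| ^ 2 / 2 ≤ exp |t| := by
    nlinarith [quadratic_le_exp_of_nonneg (abs_nonneg t), abs_nonneg t]
  have hcosh : exp |t| ≤ 2 * cosh t := by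
    rw [← cosh_abs, cosh_eq]
    linarith [exp_pos (-|t|)]
  nlinarith [sq_abs t]

theorem integrable_exp_neg_mul_cosh_mul_exp (a : ℝ) {x : ℝ} (hx : 0 < x) :
    Integrable fun t ↦ exp (-x * cosh t) * exp (a * t) := by
  have hgauss : Integrable fun t ↦ exp (a ^ 2 / x) * exp (-(x / 4) * (t - 2 * a / x) ^ 2) :=
    ((integrable_exp_neg_mul_sq (by positivity)).comp_sub_right _).const_mul _
  refine hgauss.mono (by fun_prop) (ae_of_all _ fun t ↦ ?_)
  rw [norm_of_nonneg (by positivity), norm_of_nonneg (by positivity), ← exp_add, ← exp_add,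
    exp_le_exp]
  have hsq : a ^ 2 / x + -(x / 4) * (t - 2 * a / x) ^ 2 = a * t - x * (t ^ 2 / 4) := by
    field_simp
    ring
  nlinarith [sq_div_four_le_cosh t]

theorem integral_exp_neg_mul_cosh_mul_exp (a : ℝ) {x : ℝ} (hx : 0 < x) :
    ∫ t, exp (-x * cosh t) * exp (a * t) = 2 * besselK a x := by
  rw [integral_eq_integral_Ioi_add_comp_neg (integrable_exp_neg_mul_cosh_mul_exp a hx), besselK,
    ← integral_const_mul]
  congr with t
  rw [cosh_neg, cosh_eq (a * t)]
  ring_nf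

theorem sqrt_mul_exp_rpow {r : ℝ} (hr : 0 ≤ r) (t a : ℝ) :
    (√r * exp t) ^ a = r ^ (a / 2) * exp (a * t) := by
  rw [mul_rpow (sqrt_nonneg r) (exp_pos t).le, sqrt_eq_rpow, ← rpow_mul hr, ← exp_mul]
  ring_nf

theorem neg_div_sub_mul_eq_neg_mul_cosh {b c : ℝ} (hb : 0 < b) (hc : 0 < c) (t : ℝ) :
    -b / (√(b / c) * exp t) - c * (√(b / c) * exp t) = -(2 * √(b * c)) * cosh t := by
  obtain ⟨p, hp, rfl⟩ : ∃ p, 0 < p ∧ b = p ^ 2 := ⟨√b, sqrt_pos.2 hb, (sq_sqrt hb.le).symm⟩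
  obtain ⟨q, hq, rfl⟩ : ∃ q, 0 < q ∧ c = q ^ 2 := ⟨√c, sqrt_pos.2 hc, (sq_sqrt hc.le).symm⟩
  rw [← div_pow, ← mul_pow, sqrt_sq (by positivity), sqrt_sq (by positivity), cosh_eq, exp_neg]
  field_simp
  ring

/-- For b, c > 0,
∫₀^∞ u^{a−1} exp(−b/u − c·u) du = 2(b/c)^{a/2}·K_a(2√(bc)),
the normalization constant of the GIG distribution. -/
theorem gig_normalization (a b c : ℝ) (hb : 0 < b) (hc : 0 < c) :
    ∫ u in Set.Ioi (0 : ℝ), u ^ (a - 1) * Real.exp (-b / u - c * u)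
      = 2 * (b / c) ^ (a / 2) * besselK a (2 * Real.sqrt (b * c)) := by
  have hbc : 0 < b / c := div_pos hb hc
  have hx : 0 < 2 * √(b * c) := by positivity
  rw [integral_Ioi_eq_integral_mul_exp _ (sqrt_pos.2 hbc)]
  calc ∫ t, (√(b / c) * exp t) • ((√(b / c) * exp t) ^ (a - 1)
        * exp (-b / (√(b / c) * exp t) - c * (√(b / c) * exp t)))
      = ∫ t, (b / c) ^ (a / 2) * (exp (-(2 * √(b * c)) * cosh t) * exp (a * t)) := by
        congr with t
        have hu : √(b / c) * exp t ≠ 0 := by positivity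
        rw [smul_eq_mul, ← mul_assoc, rpow_sub_one hu, mul_div_cancel₀ _ hu,
          sqrt_mul_exp_rpow hbc.le, neg_div_sub_mul_eq_neg_mul_cosh hb hc]
        ring
    _ = 2 * (b / c) ^ (a / 2) * besselK a (2 * √(b * c)) := by
        rw [integral_const_mul, integral_exp_neg_mul_cosh_mul_exp a hx]
        ring
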